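/- (ℓ1-Lipschitz continuity of the value in the kernel.) For any probability vector ρ on S and any two transition kernels q, q': |V^π_q(ρ) − V^π_{q'}(ρ)| ≤ (r_max/(1−γ)²) · Σ_{s,a} Σ_{s'} |q(s'|s,a) − q'(s'|s,a)|. -/

import Mathlib

open Finset

noncomputable section

/-- `p` is a transition kernel: `p(·|s,a)` is a probability vector on `S`. -/
def IsKernel {S A : Type*} [Fintype S] (p : S → A → S → ℝ) : Prop :=
  (∀ s a s', 0 ≤ p s a s') ∧ ∀ s a, ∑ s' : S, p s a s' = 1

/-- `π` is a policy: `π(·|s)` is a probability vector on `A`. -/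
def IsPolicy {S A : Type*} [Fintype A] (π : S → A → ℝ) : Prop :=
  (∀ s a, 0 ≤ π s a) ∧ ∀ s, ∑ a : A, π s a = 1

/-- The row-stochastic matrix `P_{p,π}(s,s') = Σ_a π(a|s) p(s'|s,a)`. -/
def Pmat {S A : Type*} [Fintype A] (π : S → A → ℝ) (p : S → A → S → ℝ) :
    Matrix S S ℝ :=
  fun s s' => ∑ a : A, π s a * p s a s'

/-- `r^π(s) = Σ_a π(a|s) r(s,a)`. -/
def rpi {S A : Type*} [Fintype A] (π : S → A → ℝ) (r : S → A → ℝ) (s : S) : ℝ :=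
  ∑ a : A, π s a * r s a

/-- The value function `V^π_p(s) = Σ_t γ^t ((P_{p,π})^t r^π)(s)`. -/
def Vval {S A : Type*} [Fintype S] [DecidableEq S] [Fintype A]
    (γ : ℝ) (π : S → A → ℝ) (r : S → A → ℝ) (p : S → A → S → ℝ) (s : S) : ℝ :=
  ∑' t : ℕ, γ ^ t * ((Pmat π p ^ t).mulVec (fun s' => rpi π r s')) s

/-- The Q-function `Q^π_p(s,a) = r(s,a) + γ Σ_{s'} p(s'|s,a) V^π_p(s')`. -/
def Qval {S A : Type*} [Fintype S] [DecidableEq S] [Fintype A]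
    (γ : ℝ) (π : S → A → ℝ) (r : S → A → ℝ) (p : S → A → S → ℝ) (s : S) (a : A) : ℝ :=
  r s a + γ * ∑ s' : S, p s a s' * Vval γ π r p s'

/-- The matrix `M_{p,π}((s,a),(s',a')) = p(s'|s,a) π(a'|s')` on `S × A`. -/
def Mmat {S A : Type*} (π : S → A → ℝ) (p : S → A → S → ℝ) :
    Matrix (S × A) (S × A) ℝ :=
  fun sa s'a' => p sa.1 sa.2 s'a'.1 * π s'a'.1 s'a'.2

/-- The discounted visitation distribution
`d^π_{p,s,a}(s',a') = (1−γ) Σ_t γ^t ((M_{p,π})^t)_{(s,a),(s',a')}`. -/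
def dvis {S A : Type*} [Fintype S] [DecidableEq S] [Fintype A] [DecidableEq A]
    (γ : ℝ) (π : S → A → ℝ) (p : S → A → S → ℝ) (x y : S × A) : ℝ :=
  (1 - γ) * ∑' t : ℕ, γ ^ t * (Mmat π p ^ t) x y

/-- `d^π_{p,ρ}(s,a) = Σ_{(s₀,a₀)} ρ_{s₀} π(a₀|s₀) d^π_{p,s₀,a₀}(s,a)`. -/
def drho {S A : Type*} [Fintype S] [DecidableEq S] [Fintype A] [DecidableEq A]
    (γ : ℝ) (π : S → A → ℝ) (p : S → A → S → ℝ) (ρ : S → ℝ) (y : S × A) : ℝ :=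
  ∑ x : S × A, ρ x.1 * π x.1 x.2 * dvis γ π p x y

/-- `KL_{sa}(p,q) = Σ_{s'} p(s'|s,a) log(p(s'|s,a)/q(s'|s,a))`
(with the convention `0 log 0 = 0`, automatic since `Real.log 0 = 0`). -/
def KLsa {S A : Type*} [Fintype S] (p q : S → A → S → ℝ) (s : S) (a : A) : ℝ :=
  ∑ s' : S, p s a s' * Real.log (p s a s' / q s a s')

end


/-!
Both value functions satisfy Bellman equations `V = r^π + γ P V` and `V' = r^π + γ P' V'`, so
`V - V' = γ (P (V - V') + (P - P') V')`. In the sup norm, with the `ℓ∞`-operator norm on matrices,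
`‖P‖ ≤ 1` and `‖V'‖ ≤ r_max / (1 - γ)` give
`‖V - V'‖ ≤ γ (‖V - V'‖ + ‖P - P'‖ r_max / (1 - γ))`, and `‖P - P'‖` is at most the `ℓ¹`
distance of the kernels.
-/

open Matrix

attribute [local instance] Matrix.linftyOpSeminormedAddCommGroup

lemma abs_sum_mul_le_of_abs_le {ι : Type*} [Fintype ι] {w x : ι → ℝ} {C : ℝ}
    (hw0 : ∀ i, 0 ≤ w i) (hw1 : ∑ i, w i = 1) (hx : ∀ i, |x i| ≤ C) :
    |∑ i, w i * x i| ≤ C :=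
  calc |∑ i, w i * x i| ≤ ∑ i, w i * C := by
        refine (abs_sum_le_sum_abs _ _).trans (sum_le_sum fun i _ => ?_)
        rw [abs_mul, abs_of_nonneg (hw0 i)]
        exact mul_le_mul_of_nonneg_left (hx i) (hw0 i)
    _ = C := by rw [← sum_mul, hw1, one_mul]

namespace Matrix

variable {m n : Type*} [Fintype m] [Fintype n]

lemma linfty_opNorm_le_of_sum_le {α : Type*} [SeminormedAddCommGroup α] {A : Matrix m n α}
    {δ : ℝ} (hδ : 0 ≤ δ) (hA : ∀ i, ∑ j, ‖A i j‖ ≤ δ) : ‖A‖ ≤ δ := by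
  lift δ to NNReal using hδ
  rw [linfty_opNorm_def, NNReal.coe_le_coe]
  refine Finset.sup_le fun i _ => ?_
  rw [← NNReal.coe_le_coe, NNReal.coe_sum]
  exact hA i

lemma linfty_opNorm_le_one_of_mem_rowStochastic [DecidableEq n] {P : Matrix n n ℝ}
    (hP : P ∈ rowStochastic ℝ n) : ‖P‖ ≤ 1 :=
  linfty_opNorm_le_of_sum_le zero_le_one fun i => by
    simp_rw [Real.norm_eq_abs, abs_of_nonneg (nonneg_of_mem_rowStochastic hP)]
    exact (sum_row_of_mem_rowStochastic hP i).le

end Matrix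

section DiscountedSum

variable {n : Type*} [Fintype n] [DecidableEq n]

noncomputable def discountedSum (γ : ℝ) (P : Matrix n n ℝ) (v : n → ℝ) (i : n) : ℝ :=
  ∑' t : ℕ, γ ^ t * (P ^ t *ᵥ v) i

variable {γ : ℝ} {P : Matrix n n ℝ}

lemma abs_pow_mulVec_apply_le (hP : P ∈ rowStochastic ℝ n) (v : n → ℝ) (t : ℕ) (i : n) :
    |(P ^ t *ᵥ v) i| ≤ ‖v‖ :=
  calc |(P ^ t *ᵥ v) i| ≤ ‖P ^ t *ᵥ v‖ := norm_le_pi_norm (P ^ t *ᵥ v) i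
    _ ≤ ‖P ^ t‖ * ‖v‖ := linfty_opNorm_mulVec _ _
    _ ≤ ‖v‖ := mul_le_of_le_one_left (norm_nonneg v)
        (linfty_opNorm_le_one_of_mem_rowStochastic (pow_mem hP t))

lemma norm_discounted_term_le (hP : P ∈ rowStochastic ℝ n) (hγ0 : 0 ≤ γ) (v : n → ℝ)
    (i : n) (t : ℕ) : ‖γ ^ t * (P ^ t *ᵥ v) i‖ ≤ ‖v‖ * γ ^ t := by
  rw [Real.norm_eq_abs, abs_mul, abs_pow, abs_of_nonneg hγ0, mul_comm]
  exact mul_le_mul_of_nonneg_right (abs_pow_mulVec_apply_le hP v t i) (pow_nonneg hγ0 t)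

lemma summable_discounted (hP : P ∈ rowStochastic ℝ n) (hγ0 : 0 ≤ γ) (hγ1 : γ < 1)
    (v : n → ℝ) (i : n) : Summable fun t : ℕ => γ ^ t * (P ^ t *ᵥ v) i :=
  .of_norm_bounded ((summable_geometric_of_lt_one hγ0 hγ1).mul_left ‖v‖)
    (norm_discounted_term_le hP hγ0 v i)

lemma norm_discountedSum_le (hP : P ∈ rowStochastic ℝ n) (hγ0 : 0 ≤ γ) (hγ1 : γ < 1)
    (v : n → ℝ) : ‖discountedSum γ P v‖ ≤ ‖v‖ / (1 - γ) := by
  refine (pi_norm_le_iff_of_nonneg (div_nonneg (norm_nonneg v) (by linarith))).2 fun i => ?_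
  refine tsum_of_norm_bounded ?_ (norm_discounted_term_le hP hγ0 v i)
  simpa [div_eq_mul_inv] using (hasSum_geometric_of_lt_one hγ0 hγ1).mul_left ‖v‖

lemma discountedSum_eq_add (hP : P ∈ rowStochastic ℝ n) (hγ0 : 0 ≤ γ) (hγ1 : γ < 1)
    (v : n → ℝ) : discountedSum γ P v = v + γ • (P *ᵥ discountedSum γ P v) := by
  funext i
  have hsum := summable_discounted hP hγ0 hγ1 v
  have hshift : ∀ t : ℕ, γ ^ (t + 1) * (P ^ (t + 1) *ᵥ v) i
      = γ * ∑ j, P i j * (γ ^ t * (P ^ t *ᵥ v) j) := by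
    intro t
    rw [pow_succ' P, ← mulVec_mulVec, mulVec, dotProduct, pow_succ, mul_sum, mul_sum]
    exact sum_congr rfl fun j _ => by ring
  rw [discountedSum, (hsum i).tsum_eq_zero_add, tsum_congr hshift, tsum_mul_left,
    Summable.tsum_finsetSum fun j _ => (hsum j).mul_left _]
  simp [mulVec, dotProduct, discountedSum, tsum_mul_left, one_apply]

end DiscountedSum

lemma norm_sub_le_of_bellman {n : Type*} [Fintype n] {γ : ℝ} (hγ0 : 0 ≤ γ) (hγ1 : γ < 1)
    {P P' : Matrix n n ℝ} (hP : ‖P‖ ≤ 1) {v W W' : n → ℝ}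
    (hW : W = v + γ • (P *ᵥ W)) (hW' : W' = v + γ • (P' *ᵥ W')) :
    ‖W - W'‖ ≤ γ * ‖P - P'‖ * ‖W'‖ / (1 - γ) := by
  have hdiff : W - W' = γ • (P *ᵥ (W - W') + (P - P') *ᵥ W') := by
    conv_lhs => rw [hW, hW']
    rw [mulVec_sub, sub_mulVec]
    module
  have hstep : ‖W - W'‖ ≤ γ * (‖W - W'‖ + ‖P - P'‖ * ‖W'‖) := by
    conv_lhs => rw [hdiff]
    rw [norm_smul, Real.norm_of_nonneg hγ0]
    refine mul_le_mul_of_nonneg_left ((norm_add_le _ _).trans (add_le_add ?_ ?_)) hγ0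
    · exact (linfty_opNorm_mulVec _ _).trans (mul_le_of_le_one_left (norm_nonneg _) hP)
    · exact linfty_opNorm_mulVec _ _
  rw [le_div_iff₀ (by linarith)]
  linarith

section MDP

variable {S A : Type*} [Fintype A] {π : S → A → ℝ}

lemma IsPolicy.le_one (hπ : IsPolicy π) (s : S) (a : A) : π s a ≤ 1 :=
  (single_le_sum (fun a' _ => hπ.1 s a') (mem_univ a)).trans (hπ.2 s).le

variable [Fintype S]

lemma Pmat_mem_rowStochastic [DecidableEq S] (hπ : IsPolicy π) {p : S → A → S → ℝ}
    (hp : IsKernel p) : Pmat π p ∈ rowStochastic ℝ S := by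
  refine mem_rowStochastic_iff_sum.2
    ⟨fun s s' => sum_nonneg fun a _ => mul_nonneg (hπ.1 s a) (hp.1 s a s'), fun s => ?_⟩
  simp only [Pmat]
  rw [sum_comm]
  simp [← mul_sum, hp.2, hπ.2 s]

lemma linfty_opNorm_Pmat_sub_le (hπ : IsPolicy π) (q q' : S → A → S → ℝ) :
    ‖Pmat π q - Pmat π q'‖ ≤ ∑ s, ∑ a, ∑ s', |q s a s' - q' s a s'| := by
  refine linfty_opNorm_le_of_sum_le (by positivity) fun s => ?_
  simp only [Real.norm_eq_abs]
  have hentry : ∀ s', |(Pmat π q - Pmat π q') s s'| ≤ ∑ a, |q s a s' - q' s a s'| := by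
    intro s'
    simp only [Matrix.sub_apply, Pmat, ← sum_sub_distrib, ← mul_sub]
    refine (abs_sum_le_sum_abs _ _).trans (sum_le_sum fun a _ => ?_)
    rw [abs_mul, abs_of_nonneg (hπ.1 s a)]
    exact mul_le_of_le_one_left (abs_nonneg _) (hπ.le_one s a)
  calc ∑ s', |(Pmat π q - Pmat π q') s s'| ≤ ∑ s', ∑ a, |q s a s' - q' s a s'| :=
        sum_le_sum fun s' _ => hentry s'
    _ = ∑ a, ∑ s', |q s a s' - q' s a s'| := sum_comm
    _ ≤ ∑ s, ∑ a, ∑ s', |q s a s' - q' s a s'| :=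
        single_le_sum (f := fun s => ∑ a, ∑ s', |q s a s' - q' s a s'|)
          (fun _ _ => by positivity) (mem_univ s)

lemma norm_rpi_le (hπ : IsPolicy π) (r : S → A → ℝ) :
    ‖rpi π r‖ ≤ ⨆ sa : S × A, |r sa.1 sa.2| := by
  have hr : ∀ s a, |r s a| ≤ ⨆ sa : S × A, |r sa.1 sa.2| := fun s a =>
    le_ciSup (f := fun sa : S × A => |r sa.1 sa.2|) (Set.finite_range _).bddAbove (s, a)
  refine (pi_norm_le_iff_of_nonneg (Real.iSup_nonneg fun _ => abs_nonneg _)).2 fun s => ?_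
  exact abs_sum_mul_le_of_abs_le (hπ.1 s) (hπ.2 s) (hr s)

lemma Vval_eq_discountedSum [DecidableEq S] (γ : ℝ) (r : S → A → ℝ) (p : S → A → S → ℝ) :
    Vval γ π r p = discountedSum γ (Pmat π p) (rpi π r) :=
  rfl

end MDP

theorem stmt14_general {S A : Type*} [Fintype S] [DecidableEq S] [Fintype A]
    (γ : ℝ) (hγ : γ ∈ Set.Ioo (0 : ℝ) 1) (r : S → A → ℝ)
    (π : S → A → ℝ) (hπ : IsPolicy π)
    (ρ : S → ℝ) (hρ0 : ∀ s, 0 ≤ ρ s) (hρ1 : ∑ s : S, ρ s = 1)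
    (q q' : S → A → S → ℝ) (hq : IsKernel q) (hq' : IsKernel q') :
    |(∑ s : S, ρ s * Vval γ π r q s) - ∑ s : S, ρ s * Vval γ π r q' s| ≤
      (⨆ sa : S × A, |r sa.1 sa.2|) / (1 - γ) ^ 2 *
        ∑ s : S, ∑ a : A, ∑ s' : S, |q s a s' - q' s a s'| := by
  obtain ⟨hγ0, hγ1⟩ := hγ
  have h1γ : 0 < 1 - γ := by linarith
  rw [Vval_eq_discountedSum, Vval_eq_discountedSum]
  set C := ⨆ sa : S × A, |r sa.1 sa.2|
  set ε := ∑ s : S, ∑ a : A, ∑ s' : S, |q s a s' - q' s a s'|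
  set V := discountedSum γ (Pmat π q) (rpi π r)
  set V' := discountedSum γ (Pmat π q') (rpi π r)
  have hP := Pmat_mem_rowStochastic hπ hq
  have hP' := Pmat_mem_rowStochastic hπ hq'
  have hV' : ‖V'‖ ≤ C / (1 - γ) := (norm_discountedSum_le hP' hγ0.le hγ1 _).trans
    (div_le_div_of_nonneg_right (norm_rpi_le hπ r) h1γ.le)
  have hdiff : ‖V - V'‖ ≤ γ * ‖Pmat π q - Pmat π q'‖ * ‖V'‖ / (1 - γ) :=
    norm_sub_le_of_bellman hγ0.le hγ1 (linfty_opNorm_le_one_of_mem_rowStochastic hP)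
      (discountedSum_eq_add hP hγ0.le hγ1 _) (discountedSum_eq_add hP' hγ0.le hγ1 _)
  calc |(∑ s, ρ s * V s) - ∑ s, ρ s * V' s| = |∑ s, ρ s * (V - V') s| := by
        simp only [Pi.sub_apply, mul_sub, sum_sub_distrib]
    _ ≤ ‖V - V'‖ := abs_sum_mul_le_of_abs_le hρ0 hρ1 fun s => norm_le_pi_norm (V - V') s
    _ ≤ 1 * ε * (C / (1 - γ)) / (1 - γ) := by
        refine hdiff.trans (div_le_div_of_nonneg_right ?_ h1γ.le)
        gcongr
        exact linfty_opNorm_Pmat_sub_le hπ q q'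
    _ = C / (1 - γ) ^ 2 * ε := by field_simp

/-- ℓ¹-Lipschitz continuity of the value in the kernel:
`|V^π_q(ρ) − V^π_{q'}(ρ)| ≤ (r_max/(1−γ)²) Σ_{s,a,s'} |q(s'|s,a) − q'(s'|s,a)|`. -/
theorem stmt14 {S A : Type*} [Fintype S] [DecidableEq S] [Fintype A] [DecidableEq A]
    [Nonempty S] [Nonempty A]
    (γ : ℝ) (hγ : γ ∈ Set.Ioo (0 : ℝ) 1) (r : S → A → ℝ)
    (π : S → A → ℝ) (hπ : IsPolicy π)
    (ρ : S → ℝ) (hρ0 : ∀ s, 0 ≤ ρ s) (hρ1 : ∑ s : S, ρ s = 1)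
    (q q' : S → A → S → ℝ) (hq : IsKernel q) (hq' : IsKernel q') :
    |(∑ s : S, ρ s * Vval γ π r q s) - ∑ s : S, ρ s * Vval γ π r q' s| ≤
      (⨆ sa : S × A, |r sa.1 sa.2|) / (1 - γ) ^ 2 *
        ∑ s : S, ∑ a : A, ∑ s' : S, |q s a s' - q' s a s'| :=
  stmt14_general γ hγ r π hπ ρ hρ0 hρ1 q q' hq hq'
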